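/- Weighted Sobolev inequality on null half-lines (Lemma 3.2). Fix γ ∈ (0,1), reals α, β ≥ 0, t ∈ ℝ, u₀ ∈ ℝ, and B ≥ 0 with sup_{s∈ℝ}|Ψ'(s)| ≤ B. Define the weight w(x) := Λ̄(ū(t,x))^α / Λ(t−x)^β. There is a constant C = C(γ, α, β, B) such that: (i) for every smooth h : ℝ → ℝ such that w·h and w·h' are square-integrable on [t−u₀, ∞) and w(x)·h(x) → 0 as x → +∞, one has sup_{x ≥ t−u₀} w(x)·|h(x)| ≤ C·( ‖w·h‖_{L²([t−u₀,∞))} + ‖w·h'‖_{L²([t−u₀,∞))} ); here {x ≥ t−u₀} is the region Σ⁺_{t,u₀} = {x : u(t,x) ≤ u₀}; (ii) symmetrically, with weight w̃(x) := Λ(t−x)^α / Λ̄(ū(t,x))^β, for every smooth h with w̃·h, w̃·h' square-integrable on the left half-line Σ⁻_{t,ū₀} = {x : ū(t,x) ≤ ū₀} and w̃(x)·h(x) → 0 as x → −∞, one has sup_{Σ⁻_{t,ū₀}} w̃·|h| ≤ C·( ‖w̃·h‖_{L²(Σ⁻_{t,ū₀})} + ‖w̃·h'‖_{L²(Σ⁻_{t,ū₀})}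 ). -/

import Mathlib

open MeasureTheory Filter Set

noncomputable section

/-- partial derivative in the first (time) variable -/
def pd1 (f : ℝ × ℝ → ℝ) (p : ℝ × ℝ) : ℝ := deriv (fun s => f (s, p.2)) p.1

/-- partial derivative in the second (space) variable -/
def pd2 (f : ℝ × ℝ → ℝ) (p : ℝ × ℝ) : ℝ := deriv (fun s => f (p.1, s)) p.2

/-- the Japanese bracket `⟨s⟩ = √(1+s²)` -/
def japb (s : ℝ) : ℝ := Real.sqrt (1 + s^2)

/-- the weight `Λ(s) = Λ̄(s) = ⟨s⟩^{2+2γ}` -/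
def Lam (γ s : ℝ) : ℝ := japb s ^ ((2:ℝ) + 2*γ)

/-- the adapted null coordinate `ū(t,x) = (t+x)/2 − (1/2)∫₀^{t−x}(Ψ'(τ))²dτ` -/
def ubar (Ψ : ℝ → ℝ) (t x : ℝ) : ℝ :=
  (t + x)/2 - (1/2) * ∫ τ in (0:ℝ)..(t - x), (deriv Ψ τ)^2

/-- the null operator `L = ∂_t + ∂_x` (the coordinate vector field `∂_ū`) -/
def Lop (f : ℝ × ℝ → ℝ) : ℝ × ℝ → ℝ := fun p => pd1 f p + pd2 f p

/-- the null operator `L̄ = ((Ψ'(t−x))²+1)/2·∂_t + ((Ψ'(t−x))²−1)/2·∂_x`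
(the coordinate vector field `∂_u`) -/
def Lbar (Ψ : ℝ → ℝ) (f : ℝ × ℝ → ℝ) : ℝ × ℝ → ℝ := fun p =>
  ((deriv Ψ (p.1 - p.2))^2 + 1)/2 * pd1 f p + ((deriv Ψ (p.1 - p.2))^2 - 1)/2 * pd2 f p


/-! With `g = w h`, one has `(g²)' = 2 g (w' h + w h')`, and both weights are log-Lipschitz,
`|w'| ≤ K w`: indeed `|(⟨s⟩^c)'| ≤ |c| ⟨s⟩^c`, while `∂ₓ(t - x) = -1` and
`∂ₓū = (1 + Ψ'(t - x)²)/2` are bounded in terms of `B`. Hence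
`|(g²)'| ≤ (2K + 1) g² + (w h')²`, and integrating `(g²)'` from `x` to the end of the
half-line where `g` vanishes bounds `g(x)²` by the weighted `L²` norms. On `Σ⁻` this uses
that `ū(t, ·)` is increasing, so that `Σ⁻` contains `(-∞, x]` for each of its points `x`. -/

section HalfLine

variable {f G : ℝ → ℝ} {a : ℝ}

theorem le_integral_Ioi_of_abs_deriv_le (hf : Differentiable ℝ f) (hG : IntegrableOn G (Ioi a))
    (hfG : ∀ x, |deriv f x| ≤ G x) (hlim : Tendsto f atTop (nhds 0)) :
    f a ≤ ∫ x in Ioi a, G x := by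
  have hf' : IntegrableOn (deriv f) (Ioi a) :=
    hG.mono' (measurable_deriv f).aestronglyMeasurable (Eventually.of_forall hfG)
  have hftc : ∫ x in Ioi a, deriv f x = 0 - f a :=
    integral_Ioi_of_hasDerivAt_of_tendsto' (fun x _ => (hf x).hasDerivAt) hf' hlim
  calc f a = ∫ x in Ioi a, -deriv f x := by rw [integral_neg, hftc]; ring
    _ ≤ ∫ x in Ioi a, G x := integral_mono hf'.neg hG fun x => (neg_le_abs _).trans (hfG x)

theorem le_integral_Iic_of_abs_deriv_le (hf : Differentiable ℝ f) (hG : IntegrableOn G (Iic a))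
    (hfG : ∀ x, |deriv f x| ≤ G x) (hlim : Tendsto f atBot (nhds 0)) :
    f a ≤ ∫ x in Iic a, G x := by
  have hf' : IntegrableOn (deriv f) (Iic a) :=
    hG.mono' (measurable_deriv f).aestronglyMeasurable (Eventually.of_forall hfG)
  have hftc : ∫ x in Iic a, deriv f x = f a - 0 :=
    integral_Iic_of_hasDerivAt_of_tendsto' (fun x _ => (hf x).hasDerivAt) hf' hlim
  calc f a = ∫ x in Iic a, deriv f x := by rw [hftc, sub_zero]
    _ ≤ ∫ x in Iic a, G x := integral_mono hf' hG fun x => (le_abs_self _).trans (hfG x)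

end HalfLine

theorem abs_le_mul_sqrt_add_sqrt {g A I J : ℝ} (hA : 0 ≤ A) (hI : 0 ≤ I) (hJ : 0 ≤ J)
    (h : g ^ 2 ≤ A * I + J) : |g| ≤ (√A + 1) * (√I + √J) := by
  refine abs_le_of_sq_le_sq (h.trans ?_) (by positivity)
  obtain ⟨x, hx, rfl⟩ : ∃ x, 0 ≤ x ∧ A = x ^ 2 := ⟨√A, Real.sqrt_nonneg A, (Real.sq_sqrt hA).symm⟩
  obtain ⟨y, hy, rfl⟩ : ∃ y, 0 ≤ y ∧ I = y ^ 2 := ⟨√I, Real.sqrt_nonneg I, (Real.sq_sqrt hI).symm⟩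
  obtain ⟨z, hz, rfl⟩ : ∃ z, 0 ≤ z ∧ J = z ^ 2 := ⟨√J, Real.sqrt_nonneg J, (Real.sq_sqrt hJ).symm⟩
  rw [Real.sqrt_sq hx, Real.sqrt_sq hy, Real.sqrt_sq hz]
  nlinarith [mul_nonneg (mul_nonneg hx hy) hz, mul_nonneg hx hy, mul_nonneg hx hz, mul_nonneg hy hz]

section WeightedSobolev

variable {w h : ℝ → ℝ} {K : ℝ}

theorem abs_deriv_sq_mul_le (hw : Differentiable ℝ w) (hh : Differentiable ℝ h)
    (hw' : ∀ x, |deriv w x| ≤ K * |w x|) (x : ℝ) :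
    |deriv (fun y => (w y * h y) ^ 2) x| ≤
      (2 * K + 1) * (w x * h x) ^ 2 + (w x * deriv h x) ^ 2 := by
  have hderiv : deriv (fun y => (w y * h y) ^ 2) x =
      2 * (w x * h x) * (deriv w x * h x + w x * deriv h x) := by
    rw [(((hw x).hasDerivAt.fun_mul (hh x).hasDerivAt).fun_pow 2).deriv]
    ring
  have hwh : |deriv w x * h x| ≤ K * |w x * h x| := by
    rw [abs_mul, abs_mul, ← mul_assoc]
    exact mul_le_mul_of_nonneg_right (hw' x) (abs_nonneg _)
  have hsum := (abs_add_le (deriv w x * h x) (w x * deriv h x)).trans (add_le_add_left hwh _)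
  rw [hderiv, abs_mul, abs_mul, abs_two, ← sq_abs (w x * h x), ← sq_abs (w x * deriv h x)]
  nlinarith [mul_le_mul_of_nonneg_left hsum (abs_nonneg (w x * h x)),
    sq_nonneg (|w x * h x| - |w x * deriv h x|)]

variable {s T : Set ℝ}

theorem setIntegral_mul_sq_add_sq_le {f g : ℝ → ℝ} {c : ℝ} (hc : 0 ≤ c)
    (hf : IntegrableOn (fun x => f x ^ 2) s) (hg : IntegrableOn (fun x => g x ^ 2) s)
    (hT : T ⊆ s) :
    ∫ x in T, (c * f x ^ 2 + g x ^ 2) ≤ c * (∫ x in s, f x ^ 2) + ∫ x in s, g x ^ 2 := by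
  calc ∫ x in T, (c * f x ^ 2 + g x ^ 2) ≤ ∫ x in s, (c * f x ^ 2 + g x ^ 2) :=
        setIntegral_mono_set ((hf.const_mul c).fun_add hg)
          (Eventually.of_forall fun x => by positivity) hT.eventuallyLE
    _ = c * (∫ x in s, f x ^ 2) + ∫ x in s, g x ^ 2 := by
        rw [integral_add (hf.const_mul c) hg, integral_const_mul]

variable (hK : 0 ≤ K) (hw : Differentiable ℝ w) (hh : Differentiable ℝ h)
  (hw' : ∀ x, |deriv w x| ≤ K * |w x|)
  (hs : IntegrableOn (fun x => (w x * h x) ^ 2) s)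
  (hs' : IntegrableOn (fun x => (w x * deriv h x) ^ 2) s)
include hK hw hh hw' hs hs'

theorem weighted_sobolev_of_tendsto_atTop (hlim : Tendsto (fun x => w x * h x) atTop (nhds 0))
    {a : ℝ} (ha : Ioi a ⊆ s) :
    |w a * h a| ≤ (√(2 * K + 1) + 1) *
      (√(∫ x in s, (w x * h x) ^ 2) + √(∫ x in s, (w x * deriv h x) ^ 2)) := by
  refine abs_le_mul_sqrt_add_sqrt (by linarith) (integral_nonneg fun _ => sq_nonneg _)
    (integral_nonneg fun _ => sq_nonneg _) ?_
  calc (w a * h a) ^ 2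
      ≤ ∫ x in Ioi a, ((2 * K + 1) * (w x * h x) ^ 2 + (w x * deriv h x) ^ 2) :=
        le_integral_Ioi_of_abs_deriv_le (by fun_prop)
          (((hs.mono_set ha).const_mul _).add (hs'.mono_set ha)) (abs_deriv_sq_mul_le hw hh hw')
          (by simpa using hlim.pow 2)
    _ ≤ _ := setIntegral_mul_sq_add_sq_le (by linarith) hs hs' ha

theorem weighted_sobolev_of_tendsto_atBot (hlim : Tendsto (fun x => w x * h x) atBot (nhds 0))
    {a : ℝ} (ha : Iic a ⊆ s) :
    |w a * h a| ≤ (√(2 * K + 1) + 1) *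
      (√(∫ x in s, (w x * h x) ^ 2) + √(∫ x in s, (w x * deriv h x) ^ 2)) := by
  refine abs_le_mul_sqrt_add_sqrt (by linarith) (integral_nonneg fun _ => sq_nonneg _)
    (integral_nonneg fun _ => sq_nonneg _) ?_
  calc (w a * h a) ^ 2
      ≤ ∫ x in Iic a, ((2 * K + 1) * (w x * h x) ^ 2 + (w x * deriv h x) ^ 2) :=
        le_integral_Iic_of_abs_deriv_le (by fun_prop)
          (((hs.mono_set ha).const_mul _).add (hs'.mono_set ha)) (abs_deriv_sq_mul_le hw hh hw')
          (by simpa using hlim.pow 2)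
    _ ≤ _ := setIntegral_mul_sq_add_sq_le (by linarith) hs hs' ha

end WeightedSobolev

section Weights

variable {u v : ℝ → ℝ} {x : ℝ}

theorem abs_deriv_one_add_sq_rpow_le (hu : DifferentiableAt ℝ u x) (e : ℝ) :
    |deriv (fun y => (1 + u y ^ 2) ^ e) x| ≤ |e| * |deriv u x| * (1 + u x ^ 2) ^ e := by
  have hpos : 0 < 1 + u x ^ 2 := by positivity
  rw [(((hu.hasDerivAt.fun_pow 2).const_add 1).rpow_const (Or.inl hpos.ne')).deriv,
    Real.rpow_sub_one hpos.ne']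
  have hu2 : 2 * |u x| ≤ 1 + u x ^ 2 := by
    nlinarith [sq_abs (u x), sq_nonneg (|u x| - 1)]
  have hrpow : 0 ≤ (1 + u x ^ 2) ^ e := by positivity
  calc |(2 : ℕ) * u x ^ (2 - 1) * deriv u x * e * ((1 + u x ^ 2) ^ e / (1 + u x ^ 2))|
      = |e| * |deriv u x| * (1 + u x ^ 2) ^ e * (2 * |u x| / (1 + u x ^ 2)) := by
        rw [abs_mul, abs_mul, abs_mul, abs_mul, abs_div, abs_of_nonneg hrpow, abs_of_pos hpos,
          show (2 - 1 : ℕ) = 1 from rfl, pow_one, Nat.cast_ofNat, abs_two]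
        ring
    _ ≤ |e| * |deriv u x| * (1 + u x ^ 2) ^ e * 1 := by
        gcongr
        exact (div_le_one hpos).2 hu2
    _ = |e| * |deriv u x| * (1 + u x ^ 2) ^ e := mul_one _

theorem Lam_pos (γ s : ℝ) : 0 < Lam γ s :=
  Real.rpow_pos_of_pos (Real.sqrt_pos.2 (by positivity)) _

theorem Lam_nonneg (γ s : ℝ) : 0 ≤ Lam γ s := (Lam_pos γ s).le

theorem Lam_rpow (γ s c : ℝ) : Lam γ s ^ c = (1 + s ^ 2) ^ ((1 + γ) * c) := by
  have hs : (0 : ℝ) ≤ 1 + s ^ 2 := by positivity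
  rw [Lam, japb, Real.sqrt_eq_rpow, ← Real.rpow_mul hs, ← Real.rpow_mul hs]
  ring_nf

theorem differentiableAt_Lam_rpow (γ c : ℝ) (hu : DifferentiableAt ℝ u x) :
    DifferentiableAt ℝ (fun y => Lam γ (u y) ^ c) x := by
  simp only [Lam_rpow]
  exact ((hu.fun_pow 2).const_add 1).rpow_const (Or.inl (by positivity))

theorem abs_deriv_Lam_rpow_le (γ c : ℝ) (hu : DifferentiableAt ℝ u x) :
    |deriv (fun y => Lam γ (u y) ^ c) x| ≤ |(1 + γ) * c| * |deriv u x| * |Lam γ (u x) ^ c| := by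
  simp only [Lam_rpow, abs_of_nonneg (Real.rpow_nonneg (by positivity : (0 : ℝ) ≤ 1 + u x ^ 2) _)]
  exact abs_deriv_one_add_sq_rpow_le hu _

theorem abs_deriv_mul_le {f g : ℝ → ℝ} {K L : ℝ} (hf : DifferentiableAt ℝ f x)
    (hg : DifferentiableAt ℝ g x) (hf' : |deriv f x| ≤ K * |f x|) (hg' : |deriv g x| ≤ L * |g x|) :
    |deriv (fun y => f y * g y) x| ≤ (K + L) * |f x * g x| := by
  rw [deriv_fun_mul hf hg]
  calc |deriv f x * g x + f x * deriv g x| ≤ |deriv f x| * |g x| + |f x| * |deriv g x| := by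
        simpa only [abs_mul] using abs_add_le (deriv f x * g x) (f x * deriv g x)
    _ ≤ K * |f x| * |g x| + |f x| * (L * |g x|) := by gcongr
    _ = (K + L) * |f x * g x| := by rw [abs_mul]; ring

variable (γ a b : ℝ) {M : ℝ}

theorem differentiable_Lam_rpow_div_Lam_rpow (hu : Differentiable ℝ u)
    (hv : Differentiable ℝ v) :
    Differentiable ℝ (fun x => Lam γ (u x) ^ a / Lam γ (v x) ^ b) := fun x =>
  (differentiableAt_Lam_rpow γ a (hu x)).div (differentiableAt_Lam_rpow γ b (hv x))
    (Real.rpow_pos_of_pos (Lam_pos γ _) _).ne'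

theorem abs_deriv_Lam_rpow_div_Lam_rpow_le (hu : Differentiable ℝ u) (hv : Differentiable ℝ v)
    (hu' : ∀ x, |deriv u x| ≤ M) (hv' : ∀ x, |deriv v x| ≤ M) (x : ℝ) :
    |deriv (fun x => Lam γ (u x) ^ a / Lam γ (v x) ^ b) x| ≤
      (|(1 + γ) * a| + |(1 + γ) * b|) * M * |Lam γ (u x) ^ a / Lam γ (v x) ^ b| := by
  have hinv : ∀ y, Lam γ (u y) ^ a / Lam γ (v y) ^ b = Lam γ (u y) ^ a * Lam γ (v y) ^ (-b) :=
    fun y => by rw [Real.rpow_neg (Lam_nonneg γ _), div_eq_mul_inv]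
  simp only [hinv]
  have hbound := abs_deriv_mul_le (K := |(1 + γ) * a| * M) (L := |(1 + γ) * -b| * M)
    (differentiableAt_Lam_rpow γ a (hu x))
    (differentiableAt_Lam_rpow γ (-b) (hv x))
    ((abs_deriv_Lam_rpow_le γ a (hu x)).trans (by gcongr; exact hu' x))
    ((abs_deriv_Lam_rpow_le γ (-b) (hv x)).trans (by gcongr; exact hv' x))
  rwa [mul_neg, abs_neg, ← add_mul] at hbound

end Weights

section NullCoordinate

variable {Ψ : ℝ → ℝ} (hΨ : Continuous (deriv Ψ)) (t : ℝ)
include hΨ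

theorem hasDerivAt_ubar (x : ℝ) :
    HasDerivAt (ubar Ψ t) ((1 + deriv Ψ (t - x) ^ 2) / 2) x := by
  have hF : HasDerivAt (fun z => ∫ τ in (0 : ℝ)..z, deriv Ψ τ ^ 2) (deriv Ψ (t - x) ^ 2) (t - x) :=
    ((hΨ.pow 2).integral_hasStrictDerivAt 0 (t - x)).hasDerivAt
  have hline : HasDerivAt (fun y : ℝ => t - y) (-1) x := (hasDerivAt_id x).const_sub t
  exact ((((hasDerivAt_id x).const_add t).div_const 2).sub
    ((hF.comp x hline).const_mul (1 / 2))).congr_deriv (by ring)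

theorem differentiable_ubar : Differentiable ℝ (ubar Ψ t) := fun x =>
  (hasDerivAt_ubar hΨ t x).differentiableAt

theorem monotone_ubar : Monotone (ubar Ψ t) :=
  monotone_of_deriv_nonneg (differentiable_ubar hΨ t) fun x => by
    rw [(hasDerivAt_ubar hΨ t x).deriv]
    positivity

theorem abs_deriv_ubar_le {B : ℝ} (hB : ∀ s, |deriv Ψ s| ≤ B) (x : ℝ) :
    |deriv (ubar Ψ t) x| ≤ 1 + B ^ 2 := by
  rw [(hasDerivAt_ubar hΨ t x).deriv, abs_of_nonneg (by positivity)]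
  nlinarith [sq_abs (deriv Ψ (t - x)), abs_nonneg (deriv Ψ (t - x)), hB (t - x)]

end NullCoordinate

theorem weighted_sobolev_on_null_halflines_general
    (γ : ℝ) (α β : ℝ) (B : ℝ) :
    ∃ C : ℝ, 0 < C ∧
      ∀ (Ψ : ℝ → ℝ), ContDiff ℝ (⊤ : ℕ∞) Ψ → (∀ s : ℝ, |deriv Ψ s| ≤ B) →
        -- (i) right half-lines Σ⁺_{t,u₀}
        (∀ (t u₀ : ℝ) (h : ℝ → ℝ), ContDiff ℝ (⊤ : ℕ∞) h →
          IntegrableOn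
            (fun x => ((Lam γ (ubar Ψ t x) ^ α / Lam γ (t - x) ^ β) * h x)^2)
            (Ici (t - u₀)) →
          IntegrableOn
            (fun x => ((Lam γ (ubar Ψ t x) ^ α / Lam γ (t - x) ^ β) * deriv h x)^2)
            (Ici (t - u₀)) →
          Tendsto (fun x => (Lam γ (ubar Ψ t x) ^ α / Lam γ (t - x) ^ β) * h x)
            atTop (nhds 0) →
          ∀ x : ℝ, t - u₀ ≤ x →
            (Lam γ (ubar Ψ t x) ^ α / Lam γ (t - x) ^ β) * |h x| ≤
              C * (Real.sqrt (∫ y in Ici (t - u₀),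
                      ((Lam γ (ubar Ψ t y) ^ α / Lam γ (t - y) ^ β) * h y)^2)
                + Real.sqrt (∫ y in Ici (t - u₀),
                      ((Lam γ (ubar Ψ t y) ^ α / Lam γ (t - y) ^ β) * deriv h y)^2))) ∧
        -- (ii) left half-lines Σ⁻_{t,ū₀}
        (∀ (t ub₀ : ℝ) (h : ℝ → ℝ), ContDiff ℝ (⊤ : ℕ∞) h →
          IntegrableOn
            (fun x => ((Lam γ (t - x) ^ α / Lam γ (ubar Ψ t x) ^ β) * h x)^2)
            {x : ℝ | ubar Ψ t x ≤ ub₀} →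
          IntegrableOn
            (fun x => ((Lam γ (t - x) ^ α / Lam γ (ubar Ψ t x) ^ β) * deriv h x)^2)
            {x : ℝ | ubar Ψ t x ≤ ub₀} →
          Tendsto (fun x => (Lam γ (t - x) ^ α / Lam γ (ubar Ψ t x) ^ β) * h x)
            atBot (nhds 0) →
          ∀ x : ℝ, ubar Ψ t x ≤ ub₀ →
            (Lam γ (t - x) ^ α / Lam γ (ubar Ψ t x) ^ β) * |h x| ≤
              C * (Real.sqrt (∫ y in {y : ℝ | ubar Ψ t y ≤ ub₀},
                      ((Lam γ (t - y) ^ α / Lam γ (ubar Ψ t y) ^ β) * h y)^2)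
                + Real.sqrt (∫ y in {y : ℝ | ubar Ψ t y ≤ ub₀},
                      ((Lam γ (t - y) ^ α / Lam γ (ubar Ψ t y) ^ β) * deriv h y)^2))) := by
  set K := (|(1 + γ) * α| + |(1 + γ) * β|) * (1 + B ^ 2)
  have hK : 0 ≤ K := by positivity
  refine ⟨√(2 * K + 1) + 1, by positivity, fun Ψ hΨ hΨB => ?_⟩
  have hΨ' : Continuous (deriv Ψ) := hΨ.continuous_deriv (by simp)
  have hline : ∀ t, Differentiable ℝ (fun x : ℝ => t - x) := fun t => by fun_prop
  have hline' : ∀ t x, |deriv (fun x : ℝ => t - x) x| ≤ 1 + B ^ 2 := fun t x => by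
    rw [((hasDerivAt_id' x).const_sub t).deriv, abs_neg, abs_one]
    nlinarith [sq_nonneg B]
  have hweight : ∀ s r, |Lam γ s ^ α / Lam γ r ^ β| = Lam γ s ^ α / Lam γ r ^ β := fun s r =>
    abs_of_nonneg (div_nonneg (Real.rpow_nonneg (Lam_nonneg γ s) α)
      (Real.rpow_nonneg (Lam_nonneg γ r) β))
  refine ⟨fun t u₀ h hh hi hi' hlim x hx => ?_, fun t ub₀ h hh hi hi' hlim x hx => ?_⟩
  · have hsob := weighted_sobolev_of_tendsto_atTop hK
      (differentiable_Lam_rpow_div_Lam_rpow γ α β (differentiable_ubar hΨ' t) (hline t))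
      (hh.differentiable (by simp))
      (abs_deriv_Lam_rpow_div_Lam_rpow_le γ α β (differentiable_ubar hΨ' t) (hline t)
        (abs_deriv_ubar_le hΨ' t hΨB) (hline' t))
      hi hi' hlim (a := x) fun y hy => hx.trans hy.le
    rwa [abs_mul, hweight] at hsob
  · have hsob := weighted_sobolev_of_tendsto_atBot hK
      (differentiable_Lam_rpow_div_Lam_rpow γ α β (hline t) (differentiable_ubar hΨ' t))
      (hh.differentiable (by simp))
      (abs_deriv_Lam_rpow_div_Lam_rpow_le γ α β (hline t) (differentiable_ubar hΨ' t)
        (hline' t) (abs_deriv_ubar_le hΨ' t hΨB))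
      hi hi' hlim (a := x) fun y hy => (monotone_ubar hΨ' t hy).trans hx
    rwa [abs_mul, hweight] at hsob

/-- **Weighted Sobolev inequality on null half-lines (Lemma 3.2).**
For fixed `γ ∈ (0,1)`, `α, β ≥ 0` and `B ≥ 0` there is a constant `C = C(γ,α,β,B)` such
that for every smooth `Ψ` with `sup|Ψ'| ≤ B`, every `t`, and every smooth `h` whose
weighted versions are square integrable and decay on the relevant half-line, the weighted
sup bound by the two weighted `L²` norms holds, on both families of half-lines
`Σ⁺_{t,u₀} = {x : t − u₀ ≤ x}` and `Σ⁻_{t,ū₀} = {x : ū(t,x) ≤ ū₀}`. -/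
theorem weighted_sobolev_on_null_halflines
    (γ : ℝ) (hγ0 : 0 < γ) (hγ1 : γ < 1)
    (α β : ℝ) (hα : 0 ≤ α) (hβ : 0 ≤ β) (B : ℝ) (hB : 0 ≤ B) :
    ∃ C : ℝ, 0 < C ∧
      ∀ (Ψ : ℝ → ℝ), ContDiff ℝ (⊤ : ℕ∞) Ψ → (∀ s : ℝ, |deriv Ψ s| ≤ B) →
        -- (i) right half-lines Σ⁺_{t,u₀}
        (∀ (t u₀ : ℝ) (h : ℝ → ℝ), ContDiff ℝ (⊤ : ℕ∞) h →
          IntegrableOn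
            (fun x => ((Lam γ (ubar Ψ t x) ^ α / Lam γ (t - x) ^ β) * h x)^2)
            (Ici (t - u₀)) →
          IntegrableOn
            (fun x => ((Lam γ (ubar Ψ t x) ^ α / Lam γ (t - x) ^ β) * deriv h x)^2)
            (Ici (t - u₀)) →
          Tendsto (fun x => (Lam γ (ubar Ψ t x) ^ α / Lam γ (t - x) ^ β) * h x)
            atTop (nhds 0) →
          ∀ x : ℝ, t - u₀ ≤ x →
            (Lam γ (ubar Ψ t x) ^ α / Lam γ (t - x) ^ β) * |h x| ≤
              C * (Real.sqrt (∫ y in Ici (t - u₀),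
                      ((Lam γ (ubar Ψ t y) ^ α / Lam γ (t - y) ^ β) * h y)^2)
                + Real.sqrt (∫ y in Ici (t - u₀),
                      ((Lam γ (ubar Ψ t y) ^ α / Lam γ (t - y) ^ β) * deriv h y)^2))) ∧
        -- (ii) left half-lines Σ⁻_{t,ū₀}
        (∀ (t ub₀ : ℝ) (h : ℝ → ℝ), ContDiff ℝ (⊤ : ℕ∞) h →
          IntegrableOn
            (fun x => ((Lam γ (t - x) ^ α / Lam γ (ubar Ψ t x) ^ β) * h x)^2)
            {x : ℝ | ubar Ψ t x ≤ ub₀} →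
          IntegrableOn
            (fun x => ((Lam γ (t - x) ^ α / Lam γ (ubar Ψ t x) ^ β) * deriv h x)^2)
            {x : ℝ | ubar Ψ t x ≤ ub₀} →
          Tendsto (fun x => (Lam γ (t - x) ^ α / Lam γ (ubar Ψ t x) ^ β) * h x)
            atBot (nhds 0) →
          ∀ x : ℝ, ubar Ψ t x ≤ ub₀ →
            (Lam γ (t - x) ^ α / Lam γ (ubar Ψ t x) ^ β) * |h x| ≤
              C * (Real.sqrt (∫ y in {y : ℝ | ubar Ψ t y ≤ ub₀},
                      ((Lam γ (t - y) ^ α / Lam γ (ubar Ψ t y) ^ β) * h y)^2)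
                + Real.sqrt (∫ y in {y : ℝ | ubar Ψ t y ≤ ub₀},
                      ((Lam γ (t - y) ^ α / Lam γ (ubar Ψ t y) ^ β) * deriv h y)^2))) :=
  weighted_sobolev_on_null_halflines_general γ α β B
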